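/- Let 0 < p < ∞, 0 < q < ∞ and set r = min(p,q). There is a constant C, depending only on p and q, such that for every finite family f_1, ..., f_n ∈ L_{p,q}(0,∞) of disjointly supported functions, ‖Σ_{i=1}^n f_i‖_{p,q} ≤ C (Σ_{i=1}^n ‖f_i‖_{p,q}^r)^{1/r} (upper r-estimate). -/

import Mathlib

open MeasureTheory Filter Set Topology
open scoped ENNReal

noncomputable section

/-- Lebesgue measure on `(0,∞)`. -/
def mIoi : Measure ℝ := volume.restrict (Set.Ioi (0:ℝ))

/-- Decreasing rearrangement of `f` with respect to Lebesgue measure on `(0,∞)`: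
`μ_t(f) = inf { s ≥ 0 : m({ x : |f(x)| > s }) ≤ t }`. -/
def rearr (f : ℝ → ℂ) (t : ℝ) : ℝ :=
  sInf {s : ℝ | 0 ≤ s ∧ mIoi {x | s < ‖f x‖} ≤ ENNReal.ofReal t}

/-- The Lorentz `L_{p,q}(0,∞)` quasi-norm (extended-real valued):
`‖f‖_{p,q} = ((q/p) ∫_0^∞ t^{q/p-1} μ_t(f)^q dt)^{1/q}`. -/
def lorentzNormE (p q : ℝ) (f : ℝ → ℂ) : ℝ≥0∞ :=
  (ENNReal.ofReal (q / p) *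
    ∫⁻ t in Set.Ioi (0:ℝ), ENNReal.ofReal (t ^ (q / p - 1) * rearr f t ^ q)) ^ (1 / q)

/-- Membership in the Lorentz space `L_{p,q}(0,∞)`. -/
def MemLorentz (p q : ℝ) (f : ℝ → ℂ) : Prop :=
  AEMeasurable f mIoi ∧ lorentzNormE p q f < ⊤

/-- The real-valued Lorentz quasi-norm. -/
def lorNorm (p q : ℝ) (f : ℝ → ℂ) : ℝ := (lorentzNormE p q f).toReal

/-!
Write `d_f(s) = m{|f| > s}` for the distribution function. Since `μ_t(f) > s` exactly when
`d_f(s) > t`, the layer-cake formula turns the defining integral into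
`‖f‖_{p,q}^q = q ∫_0^∞ d_f(s)^{q/p} s^{q-1} ds`. Disjointly supported functions have additive
distribution functions, so `‖∑ f_i‖_{p,q}^q = q ∫_0^∞ (∑ d_{f_i}(s))^{q/p} s^{q-1} ds`.
If `q ≤ p`, the map `x ↦ x^{q/p}` is subadditive and the estimate holds for `r = q`; if `p ≤ q`,
Minkowski's inequality in `L^{q/p}(s^{q-1} ds)` gives it for `r = p`. In both cases `C = 1`.
-/

def distribution (f : ℝ → ℂ) (s : ℝ) : ℝ≥0∞ := mIoi {x | s < ‖f x‖}

section Distribution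

variable {f : ℝ → ℂ}

theorem distribution_antitone (f : ℝ → ℂ) : Antitone (distribution f) :=
  fun _ _ h => measure_mono fun _ hx => lt_of_le_of_lt h hx

theorem exists_lt_distribution_of_lt {s : ℝ} {c : ℝ≥0∞} (h : c < distribution f s) :
    ∃ s' > s, c < distribution f s' := by
  have hU : {x | s < ‖f x‖} = ⋃ n : ℕ, {x | s + 1 / (n + 1) < ‖f x‖} := by
    ext x
    simp only [mem_ofPred_eq, mem_iUnion]
    constructor
    · intro hx
      obtain ⟨n, hn⟩ := exists_nat_one_div_lt (sub_pos.2 hx)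
      exact ⟨n, by linarith⟩
    · rintro ⟨n, hn⟩
      linarith [Nat.one_div_pos_of_nat (α := ℝ) (n := n)]
  have hmono : Monotone fun n : ℕ => {x | s + 1 / ((n : ℝ) + 1) < ‖f x‖} :=
    fun n m hnm x (hx : s + 1 / ((n : ℝ) + 1) < ‖f x‖) => lt_of_le_of_lt (by gcongr) hx
  rw [distribution, hU, hmono.measure_iUnion, lt_iSup_iff] at h
  obtain ⟨n, hn⟩ := h
  exact ⟨_, lt_add_of_pos_right s Nat.one_div_pos_of_nat, hn⟩

theorem tendsto_distribution_atTop (hf : AEMeasurable f mIoi)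
    (hfin : ∃ s, distribution f s ≠ ⊤) : Tendsto (distribution f) atTop (𝓝 0) := by
  have hInter : (⋂ s : ℝ, {x | s < ‖f x‖}) = ∅ :=
    eq_empty_of_forall_notMem fun x hx => lt_irrefl ‖f x‖ (mem_iInter.1 hx ‖f x‖)
  have h := tendsto_measure_iInter_atTop (μ := mIoi)
    (fun _ => nullMeasurableSet_lt aemeasurable_const hf.norm)
    (fun _ _ h _ hx => lt_of_le_of_lt h hx) hfin
  rwa [hInter, measure_empty] at h

theorem rearr_nonneg (f : ℝ → ℂ) (t : ℝ) : 0 ≤ rearr f t :=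
  Real.sInf_nonneg fun _ hs => hs.1

theorem lt_rearr_iff (hf : AEMeasurable f mIoi) (hfin : ∃ s, distribution f s ≠ ⊤)
    {s t : ℝ} (hs : 0 ≤ s) (ht : 0 < t) :
    s < rearr f t ↔ ENNReal.ofReal t < distribution f s := by
  have hbdd : BddBelow {s : ℝ | 0 ≤ s ∧ distribution f s ≤ ENNReal.ofReal t} :=
    ⟨0, fun _ h => h.1⟩
  constructor
  · intro h
    by_contra! hle
    exact (csInf_le hbdd ⟨hs, hle⟩).not_gt h
  · intro h
    obtain ⟨s', hss', hs'⟩ := exists_lt_distribution_of_lt h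
    obtain ⟨σ, hσ, hσ0⟩ := (((tendsto_distribution_atTop hf hfin).eventually
      (ge_mem_nhds (ENNReal.ofReal_pos.2 ht))).and (eventually_ge_atTop 0)).exists
    refine hss'.trans_le (le_csInf ⟨σ, hσ0, hσ⟩ fun b hb => ?_)
    by_contra! hbs
    exact (hs'.trans_le (distribution_antitone f hbs.le)).not_ge hb.2

theorem rearr_antitoneOn (hf : AEMeasurable f mIoi) (hfin : ∃ s, distribution f s ≠ ⊤) :
    AntitoneOn (rearr f) (Ioi 0) := by
  intro t ht t' ht' htt'
  by_contra! hlt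
  have h := (lt_rearr_iff hf hfin (rearr_nonneg f t) ht').1 hlt
  exact lt_irrefl _ ((lt_rearr_iff hf hfin (rearr_nonneg f t) ht).2
    ((ENNReal.ofReal_le_ofReal htt').trans_lt h))

/-- Here the infimum defining `rearr f t` is over the empty set, and `sInf ∅ = 0`. -/
theorem lorentzNormE_eq_zero_of_distribution_eq_top {p q : ℝ} (hq : 0 < q)
    (h : ∀ s, distribution f s = ⊤) : lorentzNormE p q f = 0 := by
  have hrearr : rearr f = 0 := funext fun t => by
    rw [rearr, Pi.zero_apply, ← Real.sInf_empty]
    congr 1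
    exact eq_empty_of_forall_notMem fun s hs =>
      ENNReal.ofReal_ne_top (top_le_iff.1 ((h s).symm.trans_le hs.2))
  simp [lorentzNormE, hrearr, Real.zero_rpow hq.ne', hq]

end Distribution

def powWeight (a : ℝ) : Measure ℝ :=
  (volume.restrict (Ioi 0)).withDensity fun t => ENNReal.ofReal (t ^ (a - 1))

theorem ae_powWeight_pos (a : ℝ) : ∀ᵐ t ∂powWeight a, 0 < t :=
  (withDensity_absolutelyContinuous _ _) (ae_restrict_mem measurableSet_Ioi)

theorem lintegral_Ioo_rpow_sub_one {a c : ℝ} (ha : 0 < a) (hc : 0 ≤ c) :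
    ∫⁻ t in Ioo 0 c, ENNReal.ofReal (t ^ (a - 1)) = ENNReal.ofReal (c ^ a / a) := by
  have hint : IntegrableOn (fun t : ℝ => t ^ (a - 1)) (Ioc 0 c) :=
    (intervalIntegrable_iff_integrableOn_Ioc_of_le hc).1
      (intervalIntegral.intervalIntegrable_rpow' (by linarith))
  rw [← ofReal_integral_eq_lintegral_ofReal (hint.mono_set Ioo_subset_Ioc_self)
      ((ae_restrict_mem measurableSet_Ioo).mono fun t ht => Real.rpow_nonneg ht.1.le _),
    ← integral_Ioc_eq_integral_Ioo, ← intervalIntegral.integral_of_le hc,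
    integral_rpow (Or.inl (by linarith)), sub_add_cancel, Real.zero_rpow ha.ne', sub_zero]

theorem lintegral_Ioi_rpow_eq_top (a : ℝ) :
    ∫⁻ t in Ioi 0, ENNReal.ofReal (t ^ a) = ⊤ := by
  by_contra h
  refine not_integrableOn_Ioi_rpow a ((lintegral_ofReal_ne_top_iff_integrable ?_ ?_).1 h)
  · exact (continuousOn_id.rpow_const fun t ht => Or.inl (ne_of_gt ht)).aestronglyMeasurable
      measurableSet_Ioi
  · exact (ae_restrict_mem measurableSet_Ioi).mono fun t ht => Real.rpow_nonneg (le_of_lt ht) _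

theorem powWeight_setOf_ofReal_lt {a : ℝ} (ha : 0 < a) (c : ℝ≥0∞) :
    powWeight a {t | ENNReal.ofReal t < c} = c ^ a / ENNReal.ofReal a := by
  rw [powWeight, withDensity_apply' _ _,
    Measure.restrict_restrict (measurableSet_lt ENNReal.measurable_ofReal measurable_const)]
  rcases eq_or_ne c ⊤ with rfl | hc
  · simp only [ENNReal.ofReal_lt_top, ofPred_true, univ_inter]
    rw [lintegral_Ioi_rpow_eq_top, ENNReal.top_rpow_of_pos ha,
      ENNReal.top_div_of_ne_top ENNReal.ofReal_ne_top]
  · have hset : {t | ENNReal.ofReal t < c} ∩ Ioi 0 = Ioo 0 c.toReal := by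
      ext t
      simp only [mem_inter_iff, mem_ofPred_eq, mem_Ioi, mem_Ioo]
      constructor
      · rintro ⟨h, ht⟩
        exact ⟨ht, (ENNReal.ofReal_lt_iff_lt_toReal ht.le hc).1 h⟩
      · rintro ⟨ht, h⟩
        exact ⟨(ENNReal.ofReal_lt_iff_lt_toReal ht.le hc).2 h, ht⟩
    rw [hset, lintegral_Ioo_rpow_sub_one ha ENNReal.toReal_nonneg,
      ENNReal.ofReal_div_of_pos ha, ← ENNReal.ofReal_rpow_of_nonneg ENNReal.toReal_nonneg ha.le,
      ENNReal.ofReal_toReal hc]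

def lorentzNormOfDistribution (p q : ℝ) (D : ℝ → ℝ≥0∞) : ℝ≥0∞ :=
  (ENNReal.ofReal q * ∫⁻ s, D s ^ (q / p) ∂powWeight q) ^ (1 / q)

theorem lorentzNormOfDistribution_congr {p q : ℝ} {D D' : ℝ → ℝ≥0∞}
    (h : D =ᵐ[powWeight q] D') :
    lorentzNormOfDistribution p q D = lorentzNormOfDistribution p q D' := by
  rw [lorentzNormOfDistribution, lintegral_congr_ae (h.mono fun s hs => by rw [hs]),
    lorentzNormOfDistribution]

/-- Layer-cake formula with respect to the measure `t ^ (q / p - 1) dt`, whose level sets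
`{t | s < μ_t(f)} = {t | t < d_f(s)}` have measure `d_f(s) ^ (q / p) / (q / p)`. -/
theorem lorentzNormE_eq_lorentzNormOfDistribution {p q : ℝ} (hp : 0 < p) (hq : 0 < q)
    {f : ℝ → ℂ} (hf : AEMeasurable f mIoi) (hfin : ∃ s, distribution f s ≠ ⊤) :
    lorentzNormE p q f = lorentzNormOfDistribution p q (distribution f) := by
  unfold lorentzNormE lorentzNormOfDistribution
  set α := q / p
  have hα : 0 < α := div_pos hq hp
  have hrearr : AEMeasurable (rearr f) (volume.restrict (Ioi 0)) :=
    aemeasurable_restrict_of_antitoneOn measurableSet_Ioi (rearr_antitoneOn hf hfin)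
  have hweight (a : ℝ) : Measurable fun t : ℝ => ENNReal.ofReal (t ^ (a - 1)) := by fun_prop
  have hlhs : ∫⁻ t in Ioi 0, ENNReal.ofReal (t ^ (α - 1) * rearr f t ^ q) =
      ∫⁻ t, ENNReal.ofReal (rearr f t ^ q) ∂powWeight α := by
    have hmeas : AEMeasurable (fun t => ENNReal.ofReal (rearr f t ^ q))
        (volume.restrict (Ioi 0)) := by fun_prop
    rw [powWeight, lintegral_withDensity_eq_lintegral_mul₀ (hweight α).aemeasurable hmeas]
    refine setLIntegral_congr_fun measurableSet_Ioi fun t ht => ?_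
    rw [Pi.mul_apply, ENNReal.ofReal_mul (Real.rpow_nonneg (le_of_lt ht) _)]
  have hlevel : ∀ s ∈ Ioi (0 : ℝ), powWeight α {t | s < rearr f t} =
      distribution f s ^ α / ENNReal.ofReal α := fun s hs => by
    rw [← powWeight_setOf_ofReal_lt hα]
    refine measure_congr ((ae_powWeight_pos α).mono fun t ht => ?_)
    exact propext (lt_rearr_iff hf hfin (le_of_lt hs) ht)
  have hrhs : ∫⁻ s, distribution f s ^ α ∂powWeight q =
      ∫⁻ s in Ioi 0, distribution f s ^ α * ENNReal.ofReal (s ^ (q - 1)) := by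
    have hmeas : Measurable fun s => distribution f s ^ α :=
      ENNReal.continuous_rpow_const.measurable.comp (distribution_antitone f).measurable
    rw [powWeight, lintegral_withDensity_eq_lintegral_mul _ (hweight q) hmeas]
    simp only [Pi.mul_apply, mul_comm]
  rw [hlhs, lintegral_rpow_eq_lintegral_meas_lt_mul (μ := powWeight α)
      (ae_of_all _ (rearr_nonneg f)) (hrearr.mono_ac (withDensity_absolutelyContinuous _ _)) hq,
    setLIntegral_congr_fun measurableSet_Ioi fun s hs => by rw [hlevel s hs], hrhs]
  have hα0 : ENNReal.ofReal α ≠ 0 := (ENNReal.ofReal_pos.2 hα).ne'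
  simp_rw [div_eq_mul_inv, mul_right_comm _ (ENNReal.ofReal α)⁻¹]
  rw [lintegral_mul_const' _ _ (ENNReal.inv_ne_top.2 hα0), mul_left_comm,
    mul_comm _ (ENNReal.ofReal α)⁻¹, ← mul_assoc (ENNReal.ofReal α),
    ENNReal.mul_inv_cancel hα0 ENNReal.ofReal_ne_top, one_mul]

theorem sum_eq_of_pairwise_mul_eq_zero {ι R : Type*} [Fintype ι] [NonUnitalNonAssocSemiring R]
    [NoZeroDivisors R] {a : ι → R} (h : Pairwise fun i j => a i * a j = 0) {i : ι}
    (hi : a i ≠ 0) : ∑ j, a j = a i :=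
  Finset.sum_eq_single i (fun _ _ hji => (mul_eq_zero.1 (h hji.symm)).resolve_left hi)
    fun hi' => absurd (Finset.mem_univ i) hi'

theorem lt_norm_sum_iff_of_pairwise_mul_eq_zero {ι R : Type*} [Fintype ι] [NormedRing R]
    [NoZeroDivisors R] {a : ι → R} (h : Pairwise fun i j => a i * a j = 0) {s : ℝ}
    (hs : 0 ≤ s) : s < ‖∑ j, a j‖ ↔ ∃ i, s < ‖a i‖ := by
  constructor
  · intro hlt
    obtain ⟨i, -, hi⟩ := Finset.exists_ne_zero_of_sum_ne_zero
      (norm_pos_iff.1 (hs.trans_lt hlt))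
    exact ⟨i, by rwa [← sum_eq_of_pairwise_mul_eq_zero h hi]⟩
  · rintro ⟨i, hi⟩
    rwa [sum_eq_of_pairwise_mul_eq_zero h (norm_pos_iff.1 (hs.trans_lt hi))]

theorem distribution_sum {ι : Type*} [Fintype ι] {f : ι → ℝ → ℂ}
    (hf : ∀ i, AEMeasurable (f i) mIoi)
    (hdisj : Pairwise fun i j => (fun x => f i x * f j x) =ᵐ[mIoi] 0) {s : ℝ} (hs : 0 ≤ s) :
    distribution (fun x => ∑ i, f i x) s = ∑ i, distribution (f i) s := by
  have hae : ∀ᵐ x ∂mIoi, Pairwise fun i j => f i x * f j x = 0 := by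
    refine eventually_all.2 fun i => eventually_all.2 fun j => ?_
    by_cases hij : i = j
    · exact .of_forall fun _ h => absurd hij h
    · exact (hdisj hij).mono fun _ hx _ => hx
  have hunion : {x | s < ‖∑ i, f i x‖} =ᵐ[mIoi] ⋃ i, {x | s < ‖f i x‖} :=
    eventuallyEq_set.2 <| hae.mono fun x hx => by
      simp only [mem_ofPred_eq, mem_iUnion]
      exact lt_norm_sum_iff_of_pairwise_mul_eq_zero hx hs
  rw [distribution, measure_congr hunion, measure_iUnion₀ _ _, tsum_fintype]
  · rfl
  · intro i j hij
    refine measure_mono_null (fun x hx => ?_) (ae_iff.1 (hdisj hij))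
    exact mul_ne_zero (norm_pos_iff.1 (hs.trans_lt hx.1)) (norm_pos_iff.1 (hs.trans_lt hx.2))
  · exact fun i => nullMeasurableSet_lt aemeasurable_const (hf i).norm

theorem distribution_le_distribution_sum {ι : Type*} [Fintype ι] {f : ι → ℝ → ℂ}
    (hf : ∀ i, AEMeasurable (f i) mIoi)
    (hdisj : Pairwise fun i j => (fun x => f i x * f j x) =ᵐ[mIoi] 0) (i : ι) {s : ℝ}
    (hs : 0 ≤ s) : distribution (f i) s ≤ distribution (fun x => ∑ j, f j x) s :=
  (distribution_sum hf hdisj hs).symm ▸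
    Finset.single_le_sum_of_canonicallyOrdered (f := fun j => distribution (f j) s)
      (Finset.mem_univ i)

theorem lintegral_sum_rpow_le_sum_lintegral_rpow {α ι : Type*} [MeasurableSpace α]
    {μ : Measure α} (s : Finset ι) {D : ι → α → ℝ≥0∞} (hD : ∀ i ∈ s, AEMeasurable (D i) μ)
    {e : ℝ} (he0 : 0 < e) (he1 : e ≤ 1) :
    ∫⁻ x, (∑ i ∈ s, D i x) ^ e ∂μ ≤ ∑ i ∈ s, ∫⁻ x, D i x ^ e ∂μ := by
  rw [← lintegral_finsetSum' s fun i hi => (hD i hi).pow_const e]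
  exact lintegral_mono fun x => Finset.le_sum_of_subadditive (· ^ e)
    (ENNReal.zero_rpow_of_pos he0).le (fun a b => ENNReal.rpow_add_le_add_rpow a b he0.le he1) s _

theorem lorentzNormOfDistribution_rpow_eq_mul_eLpNorm' {p q : ℝ} (hp : 0 < p) (hq : 0 < q)
    (D : ℝ → ℝ≥0∞) :
    lorentzNormOfDistribution p q D ^ p =
      ENNReal.ofReal q ^ (p / q) * eLpNorm' D (q / p) (powWeight q) := by
  rw [lorentzNormOfDistribution, eLpNorm', ← ENNReal.rpow_mul,
    ENNReal.mul_rpow_of_nonneg _ _ (by positivity)]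
  simp only [enorm_eq_self]
  congr 2 <;> field_simp

theorem lorentzNormOfDistribution_sum_rpow_min_le {p q : ℝ} (hp : 0 < p) (hq : 0 < q)
    {ι : Type*} (s : Finset ι) {D : ι → ℝ → ℝ≥0∞} (hD : ∀ i ∈ s, Measurable (D i)) :
    lorentzNormOfDistribution p q (∑ i ∈ s, D i) ^ min p q ≤
      ∑ i ∈ s, lorentzNormOfDistribution p q (D i) ^ min p q := by
  rcases le_total q p with hqp | hpq
  · have hpow (D : ℝ → ℝ≥0∞) : lorentzNormOfDistribution p q D ^ q =
        ENNReal.ofReal q * ∫⁻ s, D s ^ (q / p) ∂powWeight q := by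
      rw [lorentzNormOfDistribution, ← ENNReal.rpow_mul, one_div_mul_cancel hq.ne',
        ENNReal.rpow_one]
    simp only [min_eq_right hqp, hpow, Finset.sum_apply, ← Finset.mul_sum]
    gcongr
    exact lintegral_sum_rpow_le_sum_lintegral_rpow s (fun i hi => (hD i hi).aemeasurable)
      (div_pos hq hp) (div_le_one_of_le₀ hqp hp.le)
  · simp only [min_eq_left hpq, lorentzNormOfDistribution_rpow_eq_mul_eLpNorm' hp hq,
      ← Finset.mul_sum]
    gcongr
    exact eLpNorm'_sum_le (fun i hi => (hD i hi).aestronglyMeasurable) ((one_le_div hp).2 hpq)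

/-- For `0 < p, q < ∞` and `r = min(p,q)`, `L_{p,q}(0,∞)` satisfies an upper
`r`-estimate (with a constant depending only on `p` and `q`) on disjointly supported
functions. -/
theorem lorentz_upper_r_estimate (p q : ℝ) (hp : 0 < p) (hq : 0 < q) :
    ∃ C : ℝ, 0 < C ∧ ∀ (n : ℕ) (f : Fin n → ℝ → ℂ),
      (∀ i, MemLorentz p q (f i)) →
      (∀ i j, i ≠ j → (fun x => f i x * f j x) =ᵐ[mIoi] 0) →
      lorentzNormE p q (fun x => ∑ i, f i x) ≤
        ENNReal.ofReal C * (∑ i, lorentzNormE p q (f i) ^ (min p q)) ^ (1 / min p q) := by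
  refine ⟨1, one_pos, fun n f hf hdisj => ?_⟩
  have hmeas (i : Fin n) : AEMeasurable (f i) mIoi := (hf i).1
  rw [ENNReal.ofReal_one, one_mul, one_div, ENNReal.le_rpow_inv_iff (lt_min hp hq)]
  by_cases hfin : ∃ s, distribution (fun x => ∑ i, f i x) s ≠ ⊤
  · obtain ⟨s, hs⟩ := hfin
    have hnorm (i : Fin n) :
        lorentzNormE p q (f i) = lorentzNormOfDistribution p q (distribution (f i)) :=
      lorentzNormE_eq_lorentzNormOfDistribution hp hq (hmeas i) ⟨max s 0, ne_top_of_le_ne_top hs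
        ((distribution_le_distribution_sum hmeas hdisj i (le_max_right s 0)).trans
          (distribution_antitone _ (le_max_left s 0)))⟩
    have hsum : distribution (fun x => ∑ i, f i x) =ᵐ[powWeight q] ∑ i, distribution (f i) :=
      (ae_powWeight_pos q).mono fun s hs =>
        (distribution_sum hmeas hdisj hs.le).trans (Finset.sum_apply _ _ _).symm
    rw [lorentzNormE_eq_lorentzNormOfDistribution hp hq
      (Finset.aemeasurable_fun_sum _ fun i _ => hmeas i) ⟨s, hs⟩,
      lorentzNormOfDistribution_congr hsum]
    simp only [hnorm]
    exact lorentzNormOfDistribution_sum_rpow_min_le hp hq _ fun i _ =>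
      (distribution_antitone (f i)).measurable
  · push Not at hfin
    rw [lorentzNormE_eq_zero_of_distribution_eq_top hq hfin,
      ENNReal.zero_rpow_of_pos (lt_min hp hq)]
    exact zero_le
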